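/- Let H ∈ (0,1) and define b(x) = ∫₀^∞ F_H(v)·(1 − e^{−2Hv})·sin(xv) dv. Then for every x > 0: b(x) > 8xH² / ( (H² + x²)·(9H² + x²) ); in particular b(x) > 0 for all x > 0. -/

import Mathlib

open Real MeasureTheory

/-- `F_H(v) = 2 cosh(Hv) - |2 sinh(v/2)|^{2H}`. -/
noncomputable def Ffun (H v : ℝ) : ℝ :=
  2 * Real.cosh (H * v) - |2 * Real.sinh (v / 2)| ^ (2 * H)

/-!
With `u = e^{-v}`, the binomial series `(1 - u)^{2H} = ∑ (-1)^k C(2H, k) u^k` expands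
`F_H(v) (1 - e^{-2Hv})` as `e^{-Hv} - e^{-3Hv} + ∑_k (-1)^k C(2H, k+1) (e^{-(k+1-H)v} - e^{-(k+1+H)v})`.
Since `|C(2H, k+1)| ≤ 2H/(k+1)`, the series may be integrated termwise against `sin (xv)`, and
`∫₀^∞ e^{-av} sin (xv) dv = x/(a² + x²)` turns `b(x)` into the leading term
`8xH²/((H² + x²)(9H² + x²))` plus `∑_k (k+1) (-1)^k C(2H, k+1) γ_k`, where
`γ_k = 4Hx/(((k+1-H)² + x²)((k+1+H)² + x²))` is strictly decreasing. The partial sums of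
`(k+1) (-1)^k C(2H, k+1)` equal `2H (-1)^n C(2H-2, n) > 0`, so by Abel summation the tail is at
least `2H (γ_0 - γ_1) > 0`.
-/

open Set Filter

namespace Ring

variable {R : Type*} [CommRing R] [BinomialRing R]

theorem succ_mul_choose_succ (r : R) (k : ℕ) :
    (k + 1 : R) * choose r (k + 1) = r * choose (r - 1) k := by
  simpa [choose_one_right, nsmul_eq_mul] using choose_smul_choose r (n := k + 1) (k := 1) (by omega)

theorem sum_range_neg_one_pow_mul_choose (r : R) (n : ℕ) :
    ∑ j ∈ Finset.range (n + 1), (-1) ^ j * choose r j = (-1) ^ n * choose (r - 1) n := by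
  induction n with
  | zero => simp
  | succ n ih =>
    have pascal := choose_succ_succ (r - 1) n
    rw [sub_add_cancel] at pascal
    rw [Finset.sum_range_succ, ih, pascal, pow_succ]
    ring

theorem sum_range_succ_mul_neg_one_pow_mul_choose_succ (r : R) (n : ℕ) :
    ∑ k ∈ Finset.range (n + 1), (k + 1 : R) * ((-1) ^ k * choose r (k + 1))
      = r * ((-1) ^ n * choose (r - 2) n) := by
  simp_rw [mul_left_comm _ ((-1 : R) ^ _), succ_mul_choose_succ, mul_left_comm _ r,
    ← Finset.mul_sum, sum_range_neg_one_pow_mul_choose, sub_sub, one_add_one_eq_two]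

end Ring

namespace Real

theorem choose_eq_prod (r : ℝ) (n : ℕ) :
    Ring.choose r n = (∏ j ∈ Finset.range n, (r - j)) / n.factorial := by
  rw [Ring.choose_eq_smul, smul_eq_mul, inv_mul_eq_div, ← descPochhammer_eval_eq_prod_range,
    ← Polynomial.aeval_eq_smeval, ← descPochhammer_map (algebraMap ℤ ℝ),
    Polynomial.eval_map_algebraMap]

theorem abs_choose_le_one {r : ℝ} (hr : |r| ≤ 1) (n : ℕ) : |Ring.choose r n| ≤ 1 := by
  have hfact : ((n.factorial : ℕ) : ℝ) = ∏ j ∈ Finset.range n, ((j : ℝ) + 1) := by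
    rw [← Finset.prod_range_add_one_eq_factorial]; push_cast; rfl
  rw [choose_eq_prod, abs_div, Finset.abs_prod, Nat.abs_cast, div_le_one (by positivity), hfact]
  refine Finset.prod_le_prod (fun _ _ => abs_nonneg _) fun j _ => ?_
  calc |r - j| ≤ |r| + |(j : ℝ)| := abs_sub _ _
    _ ≤ j + 1 := by rw [Nat.abs_cast]; linarith

theorem abs_choose_succ_le {a : ℝ} (ha0 : 0 ≤ a) (ha2 : a ≤ 2) (k : ℕ) :
    |Ring.choose a (k + 1)| ≤ a / (k + 1) := by
  rw [le_div_iff₀ (by positivity), ← abs_of_pos (by positivity : (0 : ℝ) < k + 1), ← abs_mul,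
    mul_comm, Ring.succ_mul_choose_succ, abs_mul, abs_of_nonneg ha0]
  exact mul_le_of_le_one_right ha0 (abs_choose_le_one (abs_le.mpr ⟨by linarith, by linarith⟩) k)

theorem neg_one_pow_mul_choose_neg_pos {s : ℝ} (hs : 0 < s) (n : ℕ) :
    0 < (-1) ^ n * Ring.choose (-s) n := by
  have hprod : (-1) ^ n * ∏ j ∈ Finset.range n, (-s - j) = ∏ j ∈ Finset.range n, (s + j) := by
    rw [← Finset.card_range n, ← Finset.prod_const, Finset.card_range, ← Finset.prod_mul_distrib]
    exact Finset.prod_congr rfl fun _ _ => by ring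
  rw [choose_eq_prod, mul_div_assoc', hprod]
  exact div_pos (Finset.prod_pos fun j _ => by positivity) (by positivity)

theorem hasSum_neg_pow_mul_choose (a : ℝ) {u : ℝ} (hu : |u| < 1) :
    HasSum (fun k => (-u) ^ k * Ring.choose a k) ((1 - u) ^ a) := by
  have h := one_add_rpow_hasFPowerSeriesOnBall_zero (a := a) |>.hasSum (y := -u) ?_
  · simpa [binomialSeries, FormalMultilinearSeries.ofScalars_apply_eq, sub_eq_add_neg] using h
  · simpa [enorm_eq_nnnorm, ← NNReal.coe_lt_coe] using hu

theorem abs_two_sinh_half_rpow {v : ℝ} (hv : 0 ≤ v) (s : ℝ) :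
    |2 * sinh (v / 2)| ^ s = exp (s * v / 2) * (1 - exp (-v)) ^ s := by
  have hsinh : 2 * sinh (v / 2) = exp (v / 2) * (1 - exp (-v)) := by
    rw [sinh_eq, mul_sub, ← exp_add]
    ring_nf
  have h1 : 0 ≤ 1 - exp (-v) := by simpa using hv
  rw [hsinh, abs_of_nonneg (by positivity), mul_rpow (exp_pos _).le h1, ← exp_mul]
  ring_nf

end Real

theorem le_of_hasSum_mul_antitone {a γ : ℕ → ℝ} {s : ℝ} (hs : HasSum (fun k => a k * γ k) s)
    (hγ : Antitone γ) (hγ0 : ∀ k, 0 ≤ γ k) (ha : ∀ n, 0 ≤ ∑ k ∈ Finset.range (n + 1), a k) :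
    a 0 * (γ 0 - γ 1) ≤ s := by
  have partial_sum_ge (n : ℕ) : γ (n + 1) * ∑ k ∈ Finset.range (n + 1), a k + a 0 * (γ 0 - γ 1)
      ≤ ∑ k ∈ Finset.range (n + 1), a k * γ k := by
    induction n with
    | zero => simp only [zero_add, Finset.sum_range_one]; linarith
    | succ n ih =>
      have hγ_step := mul_le_mul_of_nonneg_right (hγ (Nat.le_succ (n + 1))) (ha (n + 1))
      rw [Finset.sum_range_succ] at hγ_step ⊢
      rw [Finset.sum_range_succ (fun k => a k * γ k)]
      linarith
  refine ge_of_tendsto' (hs.tendsto_sum_nat.comp (tendsto_add_atTop_nat 1)) fun n => ?_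
  dsimp only [Function.comp_apply]
  linarith [partial_sum_ge n, mul_nonneg (hγ0 (n + 1)) (ha n)]

theorem exp_neg_mul_mul_sin_eq_im (a x v : ℝ) :
    exp (-(a * v)) * sin (x * v) = (Complex.exp ((-a + x * Complex.I) * v)).im := by
  rw [Complex.exp_im]
  simp

theorem integrableOn_exp_neg_mul {a : ℝ} (ha : 0 < a) :
    IntegrableOn (fun v => exp (-(a * v))) (Ioi 0) := by
  simpa [neg_mul] using integrableOn_exp_mul_Ioi (neg_neg_of_pos ha) 0

theorem integral_exp_neg_mul {a : ℝ} (ha : 0 < a) : ∫ v in Ioi 0, exp (-(a * v)) = 1 / a := by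
  simpa [neg_mul, neg_div_neg_eq] using integral_exp_mul_Ioi (neg_neg_of_pos ha) 0

theorem integrableOn_exp_neg_mul_mul_sin {a : ℝ} (ha : 0 < a) (x : ℝ) :
    IntegrableOn (fun v => exp (-(a * v)) * sin (x * v)) (Ioi 0) := by
  simp_rw [exp_neg_mul_mul_sin_eq_im]
  exact (integrableOn_exp_mul_complex_Ioi (by simpa using ha) 0).im

theorem integral_exp_neg_mul_mul_sin {a : ℝ} (ha : 0 < a) (x : ℝ) :
    ∫ v in Ioi 0, exp (-(a * v)) * sin (x * v) = x / (a ^ 2 + x ^ 2) := by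
  have hre : (-a + x * Complex.I).re < 0 := by simpa using ha
  simp_rw [exp_neg_mul_mul_sin_eq_im, ← RCLike.im_to_complex]
  rw [integral_im (integrableOn_exp_mul_complex_Ioi hre 0), integral_exp_mul_complex_Ioi hre]
  simp [Complex.div_im, Complex.normSq_apply]
  ring

theorem abs_exp_neg_mul_sub_exp_neg_mul_le {a b v : ℝ} (hab : a ≤ b) (hv : 0 ≤ v) :
    |exp (-(a * v)) - exp (-(b * v))| ≤ exp (-(a * v)) := by
  have hle : exp (-(b * v)) ≤ exp (-(a * v)) := by gcongr
  rw [abs_of_nonneg (sub_nonneg.mpr hle)]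
  linarith [exp_pos (-(b * v))]

theorem hasSum_integral_exp_sub_exp_mul_sin {ι : Type*} [Countable ι] {c a b : ι → ℝ}
    {f : ℝ → ℝ} (ha : ∀ i, 0 < a i) (hab : ∀ i, a i ≤ b i)
    (hc : Summable fun i => |c i| / a i)
    (hf : ∀ v ∈ Ioi (0 : ℝ), HasSum (fun i => c i * (exp (-(a i * v)) - exp (-(b i * v)))) (f v))
    (x : ℝ) :
    HasSum (fun i => c i * (x / (a i ^ 2 + x ^ 2) - x / (b i ^ 2 + x ^ 2)))
      (∫ v in Ioi 0, f v * sin (x * v)) := by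
  set F : ι → ℝ → ℝ := fun i v => c i * (exp (-(a i * v)) - exp (-(b i * v))) * sin (x * v)
  have hb i : 0 < b i := (ha i).trans_le (hab i)
  have hF_eq i : F i = fun v =>
      c i * (exp (-(a i * v)) * sin (x * v) - exp (-(b i * v)) * sin (x * v)) := by
    ext v; ring
  have hF_int i : IntegrableOn (F i) (Ioi 0) := by
    rw [hF_eq]
    exact ((integrableOn_exp_neg_mul_mul_sin (ha i) x).sub
      (integrableOn_exp_neg_mul_mul_sin (hb i) x)).const_mul (c i)
  have hF_norm i : ∫ v in Ioi 0, ‖F i v‖ ≤ |c i| / a i := by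
    calc ∫ v in Ioi 0, ‖F i v‖ ≤ ∫ v in Ioi 0, |c i| * exp (-(a i * v)) := by
          refine setIntegral_mono_on (hF_int i).norm
            ((integrableOn_exp_neg_mul (ha i)).const_mul _) measurableSet_Ioi fun v hv => ?_
          rw [Real.norm_eq_abs, abs_mul, abs_mul, ← mul_one (_ * exp _)]
          gcongr
          · exact abs_exp_neg_mul_sub_exp_neg_mul_le (hab i) (le_of_lt hv)
          · exact abs_sin_le_one _
      _ = |c i| / a i := by rw [integral_const_mul, integral_exp_neg_mul (ha i), mul_one_div]
  have hF_sum : Summable fun i => ∫ v in Ioi 0, ‖F i v‖ :=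
    hc.of_nonneg_of_le (fun i => integral_nonneg fun _ => norm_nonneg _) hF_norm
  have hfF : ∀ v ∈ Ioi (0 : ℝ), f v * sin (x * v) = ∑' i, F i v := fun v hv =>
    ((hf v hv).mul_right (sin (x * v))).tsum_eq.symm
  rw [setIntegral_congr_fun measurableSet_Ioi hfF]
  refine (hasSum_integral_of_summable_integral_norm hF_int hF_sum).congr_fun fun i => ?_
  rw [hF_eq, integral_const_mul, integral_sub (integrableOn_exp_neg_mul_mul_sin (ha i) x)
    (integrableOn_exp_neg_mul_mul_sin (hb i) x), integral_exp_neg_mul_mul_sin (ha i),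
    integral_exp_neg_mul_mul_sin (hb i)]

noncomputable def seriesCoeff (H : ℝ) : ℕ → ℝ
  | 0 => 1
  | k + 1 => (-1) ^ k * Ring.choose (2 * H) (k + 1)

noncomputable def slowRate (H : ℝ) : ℕ → ℝ
  | 0 => H
  | k + 1 => k + 1 - H

noncomputable def fastRate (H : ℝ) : ℕ → ℝ
  | 0 => 3 * H
  | k + 1 => k + 1 + H

theorem hasSum_Ffun_mul_one_sub_exp (H : ℝ) {v : ℝ} (hv : 0 < v) :
    HasSum (fun k => seriesCoeff H k * (exp (-(slowRate H k * v)) - exp (-(fastRate H k * v))))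
      (Ffun H v * (1 - exp (-(2 * H * v)))) := by
  have hu : |exp (-v)| < 1 := by
    rw [abs_of_pos (exp_pos _)]; exact exp_lt_one_iff.mpr (by linarith)
  have hbinom := (hasSum_nat_add_iff' 1).mpr (Real.hasSum_neg_pow_mul_choose (2 * H) hu)
  rw [Finset.sum_range_one, pow_zero, Ring.choose_zero_right, one_mul] at hbinom
  have hF : Ffun H v = exp (H * v) + exp (-(H * v)) - exp (H * v) * (1 - exp (-v)) ^ (2 * H) := by
    rw [Ffun, Real.abs_two_sinh_half_rpow hv.le, cosh_eq]
    ring_nf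
  have hslow (k : ℕ) : exp (-((k + 1 - H) * v)) = exp (H * v) * exp (-v) ^ (k + 1) := by
    rw [← exp_nat_mul, ← exp_add]; push_cast; ring_nf
  have hfast (k : ℕ) : exp (-((k + 1 + H) * v)) = exp (-(H * v)) * exp (-v) ^ (k + 1) := by
    rw [← exp_nat_mul, ← exp_add]; push_cast; ring_nf
  have hpw : exp (H * v) * exp (-(H * v)) = 1 := by rw [← exp_add, add_neg_cancel, exp_zero]
  have hw2 : exp (-(2 * H * v)) = exp (-(H * v)) ^ 2 := by rw [← exp_nat_mul]; ring_nf
  have hw3 : exp (-(3 * H * v)) = exp (-(H * v)) ^ 3 := by rw [← exp_nat_mul]; ring_nf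
  rw [← hasSum_nat_add_iff' 1, Finset.sum_range_one]
  have hhead : Ffun H v * (1 - exp (-(2 * H * v))) - seriesCoeff H 0 *
      (exp (-(slowRate H 0 * v)) - exp (-(fastRate H 0 * v)))
      = (exp (-(H * v)) - exp (H * v)) * ((1 - exp (-v)) ^ (2 * H) - 1) := by
    simp only [seriesCoeff, slowRate, fastRate]
    rw [hF, hw2, hw3]
    linear_combination (-(exp (-(H * v)) * (1 - (1 - exp (-v)) ^ (2 * H)))) * hpw
  rw [hhead]
  refine (hbinom.mul_left _).congr_fun fun k => ?_
  simp only [seriesCoeff, slowRate, fastRate]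
  rw [hslow, hfast]
  ring

section

variable {H : ℝ}

theorem slowRate_pos (hH0 : 0 < H) (hH1 : H < 1) (k : ℕ) : 0 < slowRate H k := by
  cases k with
  | zero => exact hH0
  | succ k => simp only [slowRate]; linarith [(k.cast_nonneg : (0 : ℝ) ≤ k)]

theorem slowRate_le_fastRate (hH0 : 0 ≤ H) (k : ℕ) : slowRate H k ≤ fastRate H k := by
  cases k <;> simp only [slowRate, fastRate] <;> linarith

theorem summable_abs_seriesCoeff_div_slowRate (hH0 : 0 < H) (hH1 : H < 1) :
    Summable fun k => |seriesCoeff H k| / slowRate H k := by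
  refine (summable_nat_add_iff 1).mp ?_
  have hsq : Summable fun k : ℕ => 2 * H / (1 - H) * (1 / ((k : ℝ) + 1) ^ 2) :=
    ((summable_nat_add_iff 1).mpr (Real.summable_one_div_nat_pow.mpr one_lt_two)).mul_left _
      |>.congr fun k => by push_cast; rfl
  refine hsq.of_nonneg_of_le (fun k => div_nonneg (abs_nonneg _) (slowRate_pos hH0 hH1 _).le)
    fun k => ?_
  have hk : (0 : ℝ) ≤ k := k.cast_nonneg
  simp only [seriesCoeff, slowRate, abs_mul, abs_pow, abs_neg, abs_one, one_pow, one_mul]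
  calc |Ring.choose (2 * H) (k + 1)| / (k + 1 - H)
      ≤ 2 * H / (k + 1) / ((k + 1) * (1 - H)) :=
        div_le_div₀ (by positivity) (Real.abs_choose_succ_le (by linarith) (by linarith) k)
          (by nlinarith) (by nlinarith)
    _ = 2 * H / (1 - H) * (1 / ((k : ℝ) + 1) ^ 2) := by
        field_simp

theorem pos_of_hasSum_seriesCoeff_tail (hH0 : 0 < H) (hH1 : H < 1) {x : ℝ} (hx : 0 < x) {s : ℝ}
    (hs : HasSum (fun k => seriesCoeff H (k + 1) *
      (x / (slowRate H (k + 1) ^ 2 + x ^ 2) - x / (fastRate H (k + 1) ^ 2 + x ^ 2))) s) :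
    0 < s := by
  set D : ℕ → ℝ := fun k => ((k + 1 - H) ^ 2 + x ^ 2) * ((k + 1 + H) ^ 2 + x ^ 2)
  have hD_pos k : 0 < D k := by positivity
  have hD_mono : StrictMono D := strictMono_nat_of_lt_succ fun k => by
    have hk : (0 : ℝ) ≤ k := k.cast_nonneg
    simp only [D, Nat.cast_succ]
    apply mul_lt_mul'' <;> nlinarith
  have hterm k : seriesCoeff H (k + 1) *
      (x / (slowRate H (k + 1) ^ 2 + x ^ 2) - x / (fastRate H (k + 1) ^ 2 + x ^ 2))
      = ((k + 1) * ((-1) ^ k * Ring.choose (2 * H) (k + 1))) * (4 * H * x / D k) := by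
    have := hD_pos k
    simp only [seriesCoeff, slowRate, fastRate, D] at this ⊢
    field_simp
    ring
  have hpartial n :
      0 ≤ ∑ k ∈ Finset.range (n + 1), (k + 1 : ℝ) * ((-1) ^ k * Ring.choose (2 * H) (k + 1)) := by
    rw [Ring.sum_range_succ_mul_neg_one_pow_mul_choose_succ, show 2 * H - 2 = -(2 - 2 * H) by ring]
    exact mul_nonneg (by linarith) (Real.neg_one_pow_mul_choose_neg_pos (by linarith) n).le
  have hle := le_of_hasSum_mul_antitone (hs.congr_fun fun k => (hterm k).symm)
    (fun k l hkl => div_le_div_of_nonneg_left (by positivity) (hD_pos k) (hD_mono.monotone hkl))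
    (fun k => (div_pos (by positivity) (hD_pos k)).le) hpartial
  have hγ : 4 * H * x / D 1 < 4 * H * x / D 0 :=
    div_lt_div_of_pos_left (by positivity) (hD_pos 0) (hD_mono zero_lt_one)
  simp only [CharP.cast_eq_zero, zero_add, pow_zero, one_mul, Ring.choose_one_right] at hle
  nlinarith

end

/-- The sine transform `b(x)` of `F_H(v)(1 − e^{−2Hv})` satisfies
`b(x) > 8xH²/((H² + x²)(9H² + x²)) > 0` for `x > 0`. -/
theorem sine_transform_lower_bound (H : ℝ) (hH : H ∈ Set.Ioo (0:ℝ) 1)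
    (b : ℝ → ℝ)
    (hb : ∀ x : ℝ, b x = ∫ v in Set.Ioi (0:ℝ),
      Ffun H v * (1 - Real.exp (-(2 * H * v))) * Real.sin (x * v)) :
    ∀ x : ℝ, 0 < x →
      b x > 8 * x * H ^ 2 / ((H ^ 2 + x ^ 2) * (9 * H ^ 2 + x ^ 2))
      ∧ 0 < b x := by
  obtain ⟨hH0, hH1⟩ := hH
  intro x hx
  have hseries := hasSum_integral_exp_sub_exp_mul_sin (slowRate_pos hH0 hH1)
    (slowRate_le_fastRate hH0.le) (summable_abs_seriesCoeff_div_slowRate hH0 hH1)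
    (fun v hv => hasSum_Ffun_mul_one_sub_exp H hv) x
  rw [← hb x, ← hasSum_nat_add_iff' 1, Finset.sum_range_one] at hseries
  have htail := pos_of_hasSum_seriesCoeff_tail hH0 hH1 hx hseries
  have hhead : seriesCoeff H 0 * (x / (slowRate H 0 ^ 2 + x ^ 2) - x / (fastRate H 0 ^ 2 + x ^ 2))
      = 8 * x * H ^ 2 / ((H ^ 2 + x ^ 2) * (9 * H ^ 2 + x ^ 2)) := by
    simp only [seriesCoeff, slowRate, fastRate]
    field_simp
    ring
  have hbound_pos : 0 < 8 * x * H ^ 2 / ((H ^ 2 + x ^ 2) * (9 * H ^ 2 + x ^ 2)) := by positivity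
  rw [hhead] at htail
  exact ⟨by linarith, by linarith⟩
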